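/- (Third version of Peano's Theorem: existence between lower and upper solutions.) Let t0, y0 ∈ ℝ, a > 0, I = [t0, t0+a], and let f : I × ℝ → ℝ be continuous. Suppose α : I → ℝ is a lower solution and β : I → ℝ is an upper solution of the problem y' = f(t,y) on I, y(t0) = y0, and suppose α(t) ≤ β(t) for all t ∈ I. Then there exists a differentiable function φ : I → ℝ with φ(t0) = y0, φ'(t) = f(t, φ(t)) for all t ∈ I, and α(t) ≤ φ(t) ≤ β(t) for all t ∈ I. -/

import Mathlib

/-!
Clamping the state between `α` and `β` (and projecting time onto `I`) turns `f` into a bounded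
continuous right-hand side `g`, for which Peano's theorem is proved by monotone approximation:
the Lipschitz envelopes `gₙ p = inf_q (g q + n * dist p q)` increase to `g`, so by comparison the
Picard–Lindelöf solutions `φₙ` of `y' = gₙ(t, y)` increase in `n`; being uniformly Lipschitz they
converge to a continuous `φ`, and dominated convergence in the integral equation shows that `φ`
solves `y' = g(t, y)`. Where `α ≤ φ ≤ β` the clamping has no effect, and a comparison argument
shows that `φ` can leave `[α, β]` neither through `β` (since `β` is an upper solution) nor
through `α`.
-/

open Set Filter Topology NNReal Function MeasureTheory

section LipschitzEnvelope

variable {X : Type*} [PseudoMetricSpace X] {h : X → ℝ}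

noncomputable def lipschitzEnvelope (h : X → ℝ) (K : ℝ≥0) (x : X) : ℝ :=
  ⨅ z, h z + K * dist x z

lemma bddBelow_range_add_mul_dist (hh : BddBelow (range h)) (K : ℝ≥0) (x : X) :
    BddBelow (range fun z => h z + K * dist x z) := by
  obtain ⟨m, hm⟩ := hh
  refine ⟨m, forall_mem_range.2 fun z => ?_⟩
  have := hm (mem_range_self z)
  have : 0 ≤ (K : ℝ) * dist x z := by positivity
  linarith

lemma lipschitzEnvelope_le (hh : BddBelow (range h)) (K : ℝ≥0) (x : X) :
    lipschitzEnvelope h K x ≤ h x := by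
  simpa [lipschitzEnvelope] using ciInf_le (bddBelow_range_add_mul_dist hh K x) x

lemma le_lipschitzEnvelope [Nonempty X] {m : ℝ} (hm : ∀ x, m ≤ h x) (K : ℝ≥0) (x : X) :
    m ≤ lipschitzEnvelope h K x :=
  le_ciInf fun z => le_add_of_le_of_nonneg (hm z) (by positivity)

lemma lipschitzWith_lipschitzEnvelope (hh : BddBelow (range h)) (K : ℝ≥0) :
    LipschitzWith K (lipschitzEnvelope h K) := by
  refine LipschitzWith.of_le_add_mul K fun x x' => ?_
  have : Nonempty X := ⟨x⟩
  rw [← sub_le_iff_le_add]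
  refine le_ciInf fun z => ?_
  have := ciInf_le (bddBelow_range_add_mul_dist hh K x) z
  have : (K : ℝ) * dist x z ≤ K * dist x' z + K * dist x x' := by
    rw [← mul_add]; gcongr; linarith [dist_triangle x x' z, dist_comm x x']
  simp only [lipschitzEnvelope] at *
  linarith

lemma monotone_lipschitzEnvelope (hh : BddBelow (range h)) (x : X) :
    Monotone fun K => lipschitzEnvelope h K x := fun K K' hK =>
  have : Nonempty X := ⟨x⟩
  le_ciInf fun z => (ciInf_le (bddBelow_range_add_mul_dist hh K x) z).trans <| by gcongr

lemma tendsto_lipschitzEnvelope (hh : BddBelow (range h)) {x : X} (hx : ContinuousAt h x)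
    {u : ℕ → X} (hu : Tendsto u atTop (𝓝 x)) :
    Tendsto (fun n : ℕ => lipschitzEnvelope h n (u n)) atTop (𝓝 (h x)) := by
  refine tendsto_order.2 ⟨fun c hc => ?_, fun c hc => ?_⟩
  · obtain ⟨c', hcc', hc'⟩ := exists_between hc
    obtain ⟨m, hm⟩ := hh
    obtain ⟨δ, hδ, hnear⟩ := Metric.eventually_nhds_iff.1 (hx.eventually (lt_mem_nhds hc'))
    obtain ⟨N, hN⟩ := exists_nat_ge (2 * (c' - m) / δ)
    filter_upwards [Metric.tendsto_nhds.1 hu (δ / 2) (half_pos hδ), eventually_ge_atTop N]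
      with n hun hn
    have : Nonempty X := ⟨x⟩
    refine hcc'.trans_le (le_ciInf fun z => ?_)
    have hmz := hm (mem_range_self z)
    rcases lt_or_ge (dist z x) δ with hz | hz
    · have : 0 ≤ (n : ℝ) * dist (u n) z := by positivity
      push_cast
      linarith [hnear hz]
    · have hfar : δ / 2 ≤ dist (u n) z := by
        linarith [dist_triangle_left z x (u n)]
      have : c' - m ≤ n * (δ / 2) := by
        have := (div_le_iff₀ hδ).1 (hN.trans (Nat.cast_le.2 hn))
        linarith
      have : (n : ℝ) * (δ / 2) ≤ n * dist (u n) z := by gcongr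
      push_cast
      linarith
  · filter_upwards [(hx.tendsto.comp hu).eventually (gt_mem_nhds hc)] with n hn
    exact (lipschitzEnvelope_le hh n (u n)).trans_lt hn

end LipschitzEnvelope

lemma le_of_hasDerivWithinAt_sub_le_mul {u v u' v' : ℝ → ℝ} {a b L : ℝ}
    (hu : ∀ t ∈ Icc a b, HasDerivWithinAt u (u' t) (Icc a b) t)
    (hv : ∀ t ∈ Icc a b, HasDerivWithinAt v (v' t) (Icc a b) t)
    (ha : u a ≤ v a)
    (hbound : ∀ t ∈ Ico a b, v t ≤ u t → u' t - v' t ≤ L * (u t - v t)) :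
    ∀ t ∈ Icc a b, u t ≤ v t := by
  intro t ht
  rw [← sub_nonpos]
  refine le_of_forall_pos_le_add fun δ hδ => ?_
  -- `u - v` stays below the barrier `δ * exp (K * (s - t))`: where they meet, the barrier grows
  -- at rate `K > |L|`, faster than `hbound` allows `u - v` to grow.
  set K := |L| + 1
  have hB : ∀ s, HasDerivAt (fun s => δ * Real.exp (K * (s - t)))
      (K * (δ * Real.exp (K * (s - t)))) s := fun s =>
    ((((hasDerivAt_id s).sub_const t).const_mul K).exp.const_mul δ).congr_deriv (by
      simp only [id, mul_one]; ring)
  have hdiff : ∀ s ∈ Ico a b, HasDerivWithinAt (u - v) (u' s - v' s) (Ici s) s := fun s hs =>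
    ((hu s (Ico_subset_Icc_self hs)).sub (hv s (Ico_subset_Icc_self hs))).mono_of_mem_nhdsWithin
      (Icc_mem_nhdsGE_of_mem hs)
  have key := image_le_of_deriv_right_lt_deriv_boundary'
    (fun s hs => ((hu s hs).sub (hv s hs)).continuousWithinAt) hdiff
    (B := fun s => δ * Real.exp (K * (s - t))) (by
      simp only [Pi.sub_apply]; linarith [mul_pos hδ (Real.exp_pos (K * (a - t)))])
    (fun s _ => (hB s).continuousAt.continuousWithinAt) (fun s _ => (hB s).hasDerivWithinAt)
    (fun s hs heq => ?_) ht
  · simpa using key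
  · have hpos : 0 < δ * Real.exp (K * (s - t)) := by positivity
    simp only [Pi.sub_apply] at heq
    calc u' s - v' s ≤ L * (u s - v s) := hbound s hs (by linarith)
      _ ≤ |L| * (u s - v s) := by gcongr; exacts [by linarith, le_abs_self L]
      _ < K * (δ * Real.exp (K * (s - t))) := by rw [heq]; simp only [K]; linarith

lemma le_of_hasDerivWithinAt_of_le_of_lipschitzWith {f g : ℝ → ℝ → ℝ} {u v : ℝ → ℝ}
    {a b : ℝ} {L : ℝ≥0}
    (hu : ∀ t ∈ Icc a b, HasDerivWithinAt u (f t (u t)) (Icc a b) t)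
    (hv : ∀ t ∈ Icc a b, HasDerivWithinAt v (g t (v t)) (Icc a b) t)
    (hfg : ∀ t y, f t y ≤ g t y) (hg : ∀ t, LipschitzWith L (g t)) (ha : u a ≤ v a) :
    ∀ t ∈ Icc a b, u t ≤ v t :=
  le_of_hasDerivWithinAt_sub_le_mul (L := L) hu hv ha fun t _ hvu => by
    have hlip : g t (u t) - g t (v t) ≤ L * (u t - v t) := by
      simpa [Real.dist_eq, abs_of_nonneg (sub_nonneg.2 hvu)] using
        (le_abs_self _).trans ((hg t).dist_le_mul (u t) (v t))
    linarith [hfg t (u t)]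

theorem exists_forall_mem_Icc_hasDerivWithinAt_of_lipschitzWith {g : ℝ → ℝ → ℝ}
    {K M : ℝ≥0} (hg : Continuous (uncurry g)) (hlip : ∀ t, LipschitzWith K (g t))
    (hb : ∀ t y, |g t y| ≤ M) {t₀ T : ℝ} (hT : t₀ ≤ T) (y₀ : ℝ) :
    ∃ φ : ℝ → ℝ, φ t₀ = y₀ ∧
      ∀ t ∈ Icc t₀ T, HasDerivWithinAt φ (g t (φ t)) (Icc t₀ T) t := by
  have hPL : IsPicardLindelof g (tmin := t₀) (tmax := T) ⟨t₀, left_mem_Icc.2 hT⟩ y₀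
      (M * (T - t₀)).toNNReal 0 M K :=
    { lipschitzOnWith := fun t _ => (hlip t).lipschitzOnWith
      continuousOn := fun y _ => (hg.comp (continuous_id.prodMk continuous_const)).continuousOn
      norm_le := fun t _ y _ => hb t y
      mul_max_le := by simp [sub_nonneg.2 hT] }
  exact hPL.exists_eq_forall_mem_Icc_hasDerivWithinAt₀

theorem ODE.tendsto_picard {E : Type*} [NormedAddCommGroup E] [NormedSpace ℝ E]
    [CompleteSpace E] {f : ℕ → ℝ → E → E} {g : ℝ → E → E} {φ : ℕ → ℝ → E} {Φ : ℝ → E}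
    {t₀ t M : ℝ} (x₀ : E)
    (hf : ∀ n, ContinuousOn (fun τ => f n τ (φ n τ)) (uIcc t₀ t))
    (hM : ∀ n, ∀ τ ∈ uIcc t₀ t, ‖f n τ (φ n τ)‖ ≤ M)
    (hlim : ∀ τ ∈ uIcc t₀ t, Tendsto (fun n => f n τ (φ n τ)) atTop (𝓝 (g τ (Φ τ)))) :
    Tendsto (fun n => ODE.picard (f n) t₀ x₀ (φ n) t) atTop (𝓝 (ODE.picard g t₀ x₀ Φ t)) := by
  simp only [ODE.picard_apply]
  refine tendsto_const_nhds.add <|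
    intervalIntegral.tendsto_integral_filter_of_dominated_convergence (fun _ => M)
      (Eventually.of_forall fun n => ((hf n).mono uIoc_subset_uIcc).aestronglyMeasurable
        measurableSet_uIoc)
      (Eventually.of_forall fun n => ae_of_all _ fun τ hτ => hM n τ (uIoc_subset_uIcc hτ))
      intervalIntegrable_const (ae_of_all _ fun τ hτ => hlim τ (uIoc_subset_uIcc hτ))

theorem ODE.hasDerivWithinAt_of_tendsto {E : Type*} [NormedAddCommGroup E] [NormedSpace ℝ E]
    [CompleteSpace E] {f : ℕ → ℝ → E → E} {g : ℝ → E → E} {φ : ℕ → ℝ → E} {Φ : ℝ → E}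
    {t₀ T M : ℝ} {x₀ : E} (hT : t₀ ≤ T)
    (hf : ∀ n, Continuous (uncurry (f n))) (hg : Continuous (uncurry g))
    (hfM : ∀ n t x, ‖f n t x‖ ≤ M)
    (hφ : ∀ n, ∀ t ∈ Icc t₀ T, HasDerivWithinAt (φ n) (f n t (φ n t)) (Icc t₀ T) t)
    (hφ₀ : ∀ n, φ n t₀ = x₀)
    (hΦ : ∀ t ∈ Icc t₀ T, Tendsto (fun n => φ n t) atTop (𝓝 (Φ t)))
    (hΦc : ContinuousOn Φ (Icc t₀ T))
    (hlim : ∀ t ∈ Icc t₀ T, Tendsto (fun n => f n t (φ n t)) atTop (𝓝 (g t (Φ t)))) :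
    ∀ t ∈ Icc t₀ T, HasDerivWithinAt Φ (g t (Φ t)) (Icc t₀ T) t := by
  have hsub : ∀ t ∈ Icc t₀ T, uIcc t₀ t ⊆ Icc t₀ T := fun t ht =>
    uIcc_subset_Icc (left_mem_Icc.2 hT) ht
  have hφ_eq : ∀ n, ∀ t ∈ Icc t₀ T, ODE.picard (f n) t₀ x₀ (φ n) t = φ n t := by
    intro n t ht
    rw [← hφ₀ n]
    exact ODE.picard_eq_of_hasDerivAt (u := univ) (hf n).continuousOn
      (fun s hs => (hφ n s (hsub t ht hs)).mono (hsub t ht)) (mapsTo_univ _ _)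
  have hΦ_eq : EqOn Φ (ODE.picard g t₀ x₀ Φ) (Icc t₀ T) := fun t ht =>
    tendsto_nhds_unique (hΦ t ht) <| (Tendsto.congr (fun n => hφ_eq n t ht)) <|
      ODE.tendsto_picard x₀
        (fun n => ((hf n).comp_continuousOn (continuousOn_id.prodMk
          (HasDerivWithinAt.continuousOn (hφ n)))).mono (hsub t ht))
        (fun n τ _ => hfM n τ _) fun τ hτ => hlim τ (hsub t ht hτ)
  exact fun t ht => (ODE.hasDerivWithinAt_picard_Icc (left_mem_Icc.2 hT) hg.continuousOn hΦc
    (fun _ _ => mem_univ _) x₀ ht).congr hΦ_eq (hΦ_eq ht)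

theorem exists_forall_mem_Icc_hasDerivWithinAt_of_continuous {g : ℝ → ℝ → ℝ} {M : ℝ≥0}
    (hg : Continuous (uncurry g)) (hb : ∀ t y, |g t y| ≤ M) {t₀ T : ℝ} (hT : t₀ ≤ T)
    (y₀ : ℝ) :
    ∃ φ : ℝ → ℝ, φ t₀ = y₀ ∧
      ∀ t ∈ Icc t₀ T, HasDerivWithinAt φ (g t (φ t)) (Icc t₀ T) t := by
  have hbelow : ∀ p : ℝ × ℝ, -(M : ℝ) ≤ uncurry g p := fun p => neg_le_of_abs_le (hb p.1 p.2)
  have hbdd : BddBelow (range (uncurry g)) := ⟨-M, forall_mem_range.2 hbelow⟩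
  set G : ℕ → ℝ → ℝ → ℝ := fun n t y => lipschitzEnvelope (uncurry g) n (t, y)
  have hGlip : ∀ n : ℕ, LipschitzWith n (uncurry (G n)) := fun n =>
    lipschitzWith_lipschitzEnvelope hbdd n
  have hGlip_right : ∀ (n : ℕ) t, LipschitzWith n (G n t) := fun n t => by
    simpa [Function.comp_def] using (hGlip n).comp (LipschitzWith.prodMk_left t)
  have hGb : ∀ n t y, |G n t y| ≤ M := fun n t y => abs_le.2 ⟨le_lipschitzEnvelope hbelow n _,
    (lipschitzEnvelope_le hbdd n _).trans (le_of_abs_le (hb t y))⟩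
  choose φ hφ₀ hφ using fun n => exists_forall_mem_Icc_hasDerivWithinAt_of_lipschitzWith
    (hGlip n).continuous (hGlip_right n) (hGb n) hT y₀
  have hmono : ∀ t ∈ Icc t₀ T, Monotone fun n => φ n t := fun t ht =>
    monotone_nat_of_le_succ fun n => le_of_hasDerivWithinAt_of_le_of_lipschitzWith (hφ n)
      (hφ (n + 1)) (fun s y => monotone_lipschitzEnvelope hbdd _ (Nat.cast_le.2 n.le_succ))
      (hGlip_right (n + 1)) (by rw [hφ₀, hφ₀]) t ht
  have hφlip : ∀ n, LipschitzOnWith M (φ n) (Icc t₀ T) := fun n =>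
    (convex_Icc t₀ T).lipschitzOnWith_of_nnnorm_hasDerivWithin_le (hφ n) fun t _ => by
      rw [← NNReal.coe_le_coe, coe_nnnorm, Real.norm_eq_abs]; exact hGb n t _
  have hφbdd : ∀ t ∈ Icc t₀ T, BddAbove (range fun n => φ n t) := fun t ht =>
    ⟨y₀ + M * dist t t₀, forall_mem_range.2 fun n => by
      have := (hφlip n).dist_le_mul t ht t₀ (left_mem_Icc.2 hT)
      rw [hφ₀, Real.dist_eq] at this
      linarith [le_abs_self (φ n t - y₀)]⟩
  set Φ := fun t => ⨆ n, φ n t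
  have hΦ : ∀ t ∈ Icc t₀ T, Tendsto (fun n => φ n t) atTop (𝓝 (Φ t)) := fun t ht =>
    tendsto_atTop_ciSup (hmono t ht) (hφbdd t ht)
  have hΦlip : LipschitzOnWith M Φ (Icc t₀ T) :=
    LipschitzOnWith.of_dist_le_mul fun s hs t ht => le_of_tendsto' ((hΦ s hs).dist (hΦ t ht))
      fun n => (hφlip n).dist_le_mul s hs t ht
  refine ⟨Φ, by simp [Φ, hφ₀], ODE.hasDerivWithinAt_of_tendsto hT
    (fun n => (hGlip n).continuous) hg (fun n t y => (Real.norm_eq_abs _).trans_le (hGb n t y))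
    hφ hφ₀ hΦ hΦlip.continuousOn fun t ht => ?_⟩
  exact tendsto_lipschitzEnvelope hbdd hg.continuousAt
    (tendsto_const_nhds.prodMk_nhds (hΦ t ht))

section Truncation

variable {f : ℝ → ℝ → ℝ} {α β : ℝ → ℝ} {t₀ T : ℝ}

noncomputable def truncatedRhs (f : ℝ → ℝ → ℝ) (α β : ℝ → ℝ) (hT : t₀ ≤ T) (t y : ℝ) :
    ℝ :=
  let s : ℝ := projIcc t₀ T hT t
  f s (max (α s) (min y (β s)))

lemma truncatedRhs_of_mem (hT : t₀ ≤ T) {t : ℝ} (ht : t ∈ Icc t₀ T) (y : ℝ) :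
    truncatedRhs f α β hT t y = f t (max (α t) (min y (β t))) := by
  simp only [truncatedRhs, projIcc_of_mem hT ht]

lemma continuous_truncatedRhs (hT : t₀ ≤ T)
    (hf : ContinuousOn (uncurry f) (Icc t₀ T ×ˢ univ))
    (hα : ContinuousOn α (Icc t₀ T)) (hβ : ContinuousOn β (Icc t₀ T)) :
    Continuous (uncurry (truncatedRhs f α β hT)) := by
  have hs : Continuous fun p : ℝ × ℝ => (projIcc t₀ T hT p.1 : ℝ) :=
    continuous_subtype_val.comp (continuous_projIcc.comp continuous_fst)
  have hmem : ∀ p : ℝ × ℝ, (projIcc t₀ T hT p.1 : ℝ) ∈ Icc t₀ T := fun p => Subtype.prop _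
  exact hf.comp_continuous (hs.prodMk ((hα.comp_continuous hs hmem).max
    (continuous_snd.min (hβ.comp_continuous hs hmem)))) fun p => ⟨hmem p, mem_univ _⟩

lemma exists_abs_truncatedRhs_le (hT : t₀ ≤ T)
    (hf : ContinuousOn (uncurry f) (Icc t₀ T ×ˢ univ))
    (hα : ContinuousOn α (Icc t₀ T)) (hβ : ContinuousOn β (Icc t₀ T)) :
    ∃ M : ℝ≥0, ∀ t y, |truncatedRhs f α β hT t y| ≤ M := by
  obtain ⟨m, hm⟩ := isCompact_Icc.bddBelow_image hα
  obtain ⟨m', hm'⟩ := isCompact_Icc.bddAbove_image (hα.sup hβ)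
  have hK : IsCompact (Icc t₀ T ×ˢ Icc m m') := isCompact_Icc.prod isCompact_Icc
  obtain ⟨C, hC⟩ := hK.exists_bound_of_continuousOn (hf.mono (prod_mono_right (subset_univ _)))
  refine ⟨C.toNNReal, fun t y => ?_⟩
  have hs := (projIcc t₀ T hT t).prop
  refine (hC (_, _) ⟨hs, (hm (mem_image_of_mem α hs)).trans (le_max_left _ _), ?_⟩).trans
    (Real.le_coe_toNNReal C)
  exact (max_le le_sup_left ((min_le_right _ _).trans le_sup_right)).trans
    (hm' (mem_image_of_mem _ hs))

end Truncation

theorem peano_lower_upper_general (t0 y0 a : ℝ) (ha : 0 < a)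
    (f : ℝ → ℝ → ℝ)
    (hf : ContinuousOn (fun p : ℝ × ℝ => f p.1 p.2)
      (Icc t0 (t0 + a) ×ˢ (univ : Set ℝ)))
    (α β α' β' : ℝ → ℝ)
    (hαd : ∀ t ∈ Icc t0 (t0 + a), HasDerivWithinAt α (α' t) (Icc t0 (t0 + a)) t)
    (hα0 : α t0 ≤ y0)
    (hαf : ∀ t ∈ Icc t0 (t0 + a), α' t ≤ f t (α t))
    (hβd : ∀ t ∈ Icc t0 (t0 + a), HasDerivWithinAt β (β' t) (Icc t0 (t0 + a)) t)
    (hβ0 : y0 ≤ β t0)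
    (hβf : ∀ t ∈ Icc t0 (t0 + a), f t (β t) ≤ β' t)
    (hαβ : ∀ t ∈ Icc t0 (t0 + a), α t ≤ β t) :
    ∃ φ : ℝ → ℝ, φ t0 = y0 ∧
      ∀ t ∈ Icc t0 (t0 + a),
        HasDerivWithinAt φ (f t (φ t)) (Icc t0 (t0 + a)) t ∧
        α t ≤ φ t ∧ φ t ≤ β t := by
  have hI : t0 ≤ t0 + a := by linarith
  have hαc := HasDerivWithinAt.continuousOn hαd
  have hβc := HasDerivWithinAt.continuousOn hβd
  obtain ⟨M, hM⟩ := exists_abs_truncatedRhs_le hI hf hαc hβc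
  obtain ⟨φ, hφ₀, hφ⟩ := exists_forall_mem_Icc_hasDerivWithinAt_of_continuous
    (continuous_truncatedRhs hI hf hαc hβc) hM hI y0
  have hφβ : ∀ t ∈ Icc t0 (t0 + a), φ t ≤ β t :=
    le_of_hasDerivWithinAt_sub_le_mul (L := 0) hφ hβd (hφ₀ ▸ hβ0) fun t ht hβφ => by
      have ht := Ico_subset_Icc_self ht
      rw [truncatedRhs_of_mem hI ht, min_eq_right hβφ, max_eq_right (hαβ t ht)]
      linarith [hβf t ht]
  have hαφ : ∀ t ∈ Icc t0 (t0 + a), α t ≤ φ t :=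
    le_of_hasDerivWithinAt_sub_le_mul (L := 0) hαd hφ (hφ₀ ▸ hα0) fun t ht hφα => by
      have ht := Ico_subset_Icc_self ht
      rw [truncatedRhs_of_mem hI ht, min_eq_left (hφα.trans (hαβ t ht)), max_eq_left hφα]
      linarith [hαf t ht]
  refine ⟨φ, hφ₀, fun t ht => ⟨?_, hαφ t ht, hφβ t ht⟩⟩
  simpa [truncatedRhs_of_mem hI ht, min_eq_left (hφβ t ht), max_eq_right (hαφ t ht)]
    using hφ t ht

/-- Third version of Peano's Theorem: if the nonlocal problem `y' = f(t,y)`,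
`y t0 = y0` on `I = [t0, t0+a]` (with `f : I × ℝ → ℝ` continuous) has a lower
solution `α` and an upper solution `β` with `α ≤ β` on `I`, then it has a
solution `φ` with `α ≤ φ ≤ β` on `I`. Lower/upper solutions are continuously
differentiable, with derivative functions `α'`, `β'`. -/
theorem peano_lower_upper (t0 y0 a : ℝ) (ha : 0 < a)
    (f : ℝ → ℝ → ℝ)
    (hf : ContinuousOn (fun p : ℝ × ℝ => f p.1 p.2)
      (Icc t0 (t0 + a) ×ˢ (univ : Set ℝ)))
    (α β α' β' : ℝ → ℝ)
    (hαd : ∀ t ∈ Icc t0 (t0 + a), HasDerivWithinAt α (α' t) (Icc t0 (t0 + a)) t)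
    (hαc : ContinuousOn α' (Icc t0 (t0 + a)))
    (hα0 : α t0 ≤ y0)
    (hαf : ∀ t ∈ Icc t0 (t0 + a), α' t ≤ f t (α t))
    (hβd : ∀ t ∈ Icc t0 (t0 + a), HasDerivWithinAt β (β' t) (Icc t0 (t0 + a)) t)
    (hβc : ContinuousOn β' (Icc t0 (t0 + a)))
    (hβ0 : y0 ≤ β t0)
    (hβf : ∀ t ∈ Icc t0 (t0 + a), f t (β t) ≤ β' t)
    (hαβ : ∀ t ∈ Icc t0 (t0 + a), α t ≤ β t) :
    ∃ φ : ℝ → ℝ, φ t0 = y0 ∧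
      ∀ t ∈ Icc t0 (t0 + a),
        HasDerivWithinAt φ (f t (φ t)) (Icc t0 (t0 + a)) t ∧
        α t ≤ φ t ∧ φ t ≤ β t :=
  peano_lower_upper_general t0 y0 a ha f hf α β α' β' hαd hα0 hαf hβd hβ0 hβf hαβ
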